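/- arXiv:math/0010092 — 8 statements merged into one kernel-verified Lean document; each statement's English description precedes it below -/
import Mathlib

section
/- Let P be a finite bounded poset with |P| > 1 and A a nonempty subset of P \ {0̂}. Then I(P,A) = ⋃_{E ∈ 𝓑} ⋂_{e ∈ E} F({e}), where 𝓑 is the blocker (the family of inclusion-minimal blocking sets) of the set family {At(a) : a ∈ A}, At(a) being the atoms of P below a. -/
open scoped Classical
open Set

/-- The order filter generated by a subset. -/
def upFilter (P : Type*) [Preorder P] (S : Set P) : Set P := {x | ∃ s ∈ S, s ≤ x}

/-- The set of minimal elements of a subset. -/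
def minsOf (P : Type*) [Preorder P] (S : Set P) : Set P := {x | Minimal (· ∈ S) x}

/-- The set of intersecters for `A` in `P`. -/
def inters (P : Type*) [PartialOrder P] [OrderBot P] (A : Set P) : Set P :=
  if A = ∅ then Set.univ
  else if A = {(⊥ : P)} then ∅
  else {b | ∀ a ∈ A, a ≠ ⊥ → ∃ z : P, IsAtom z ∧ z ≤ b ∧ z ≤ a}

/-- The set of complementers for `A` in `P`. -/
def compls (P : Type*) [PartialOrder P] [OrderBot P] (A : Set P) : Set P := (inters P A)ᶜ

/-- The blocker map: the set of minimal intersecters for `A` in `P`. -/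
def bmap (P : Type*) [PartialOrder P] [OrderBot P] (A : Set P) : Set P := minsOf P (inters P A)

/-- The blocker of a family of sets: inclusion-minimal blocking sets. -/
def blockerFam {α : Type*} (G : Set (Set α)) : Set (Set α) :=
  {H | Minimal (fun K : Set α => ∀ S ∈ G, (K ∩ S).Nonempty) H}

/-!
An element `b` lies in `⋂ e ∈ E, F({e})` exactly when `E ⊆ Iic b`, and `b` is an intersecter
exactly when `Iic b` meets the atom set `At(a)` of every `a ∈ A`, i.e. blocks the family.
Over a finite poset, a set blocks a family iff it contains an inclusion-minimal blocking set.
-/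

theorem inters_eq_of_forall_ne_bot {P : Type*} [PartialOrder P] [OrderBot P] {A : Set P}
    (hA : A.Nonempty) (hA_bot : ∀ a ∈ A, a ≠ ⊥) :
    inters P A = {b | ∀ a ∈ A, ∃ z : P, IsAtom z ∧ z ≤ b ∧ z ≤ a} := by
  have hA_ne : A ≠ {⊥} := fun h => hA_bot ⊥ (h ▸ rfl) rfl
  rw [inters, if_neg hA.ne_empty, if_neg hA_ne]
  ext b
  exact forall₂_congr fun a ha => ⟨fun h => h (hA_bot a ha), fun h _ => h⟩

theorem exists_mem_blockerFam_subset_iff {α : Type*} [Finite α] {G : Set (Set α)} {K : Set α} :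
    (∃ E ∈ blockerFam G, E ⊆ K) ↔ ∀ S ∈ G, (K ∩ S).Nonempty := by
  constructor
  · rintro ⟨E, ⟨hE, -⟩, hEK⟩ S hS
    exact (hE S hS).mono (inter_subset_inter_left S hEK)
  · intro hK
    obtain ⟨E, hEK, hE⟩ :=
      exists_minimal_le_of_wellFoundedLT (fun K' : Set α => ∀ S ∈ G, (K' ∩ S).Nonempty) K hK
    exact ⟨E, hE, hEK⟩

theorem stmt_5_general {P : Type*} [PartialOrder P] [BoundedOrder P] [Fintype P]
    (A : Set P) (h1 : A.Nonempty) (h2 : A ⊆ {x : P | x ≠ ⊥}) :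
    inters P A =
      ⋃ E ∈ blockerFam {S : Set P | ∃ a ∈ A, S = {z : P | IsAtom z ∧ z ≤ a}},
        ⋂ e ∈ E, {x : P | e ≤ x} := by
  rw [inters_eq_of_forall_ne_bot h1 h2]
  ext b
  simp only [mem_iUnion₂, mem_iInter₂, exists_prop]
  refine Iff.trans ?_ (exists_mem_blockerFam_subset_iff (K := Iic b)).symm
  constructor
  · rintro hb S ⟨a, ha, rfl⟩
    obtain ⟨z, hz, hzb, hza⟩ := hb a ha
    exact ⟨z, hzb, hz, hza⟩
  · intro hb a ha
    obtain ⟨z, hzb, hz, hza⟩ := hb _ ⟨a, ha, rfl⟩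
    exact ⟨z, hz, hzb, hza⟩

theorem stmt_5 {P : Type*} [PartialOrder P] [BoundedOrder P] [Fintype P] [Nontrivial P]
    (A : Set P) (h1 : A.Nonempty) (h2 : A ⊆ {x : P | x ≠ ⊥}) :
    inters P A =
      ⋃ E ∈ blockerFam {S : Set P | ∃ a ∈ A, S = {z : P | IsAtom z ∧ z ≤ a}},
        ⋂ e ∈ E, {x : P | e ≤ x} :=
  stmt_5_general A h1 h2
end

section
/- Let P₁, P₂ be finite bounded posets with |P₁|, |P₂| > 2. Let Q be the poset obtained from the product (P₁ \ {0̂₁,1̂₁}) × (P₂ \ {0̂₂,1̂₂}) by adjoining a new least element 0̂_Q and new greatest element 1̂_Q. Let A be a nonempty subset of Q \ {0̂_Q, 1̂_Q}, and let A↾₁ = {a₁ : (a₁,a₂) ∈ A}, A↾₂ = {a₂ : (a₁,a₂) ∈ A}. If min I(P₁, A↾₁) ≠ {1̂₁} and min I(P₂, A↾₂) ≠ {1̂₂}, then I(Q,A) = ((I(P₁,A↾₁) \ {1̂₁}) × (I(P₂,A↾₂) \ {1̂₂})) ∪ {1̂_Q}, and min I(Q,A) = min I(P₁,A↾₁) ×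 min I(P₂,A↾₂). -/
open scoped Classical
open Set

/-- Interior of a bounded poset: elements distinct from bottom and top. -/
abbrev Interior (P : Type*) [PartialOrder P] [BoundedOrder P] : Type _ :=
  {x : P // x ≠ ⊥ ∧ x ≠ ⊤}

/-- The product of the interiors of two bounded posets, with new least and
greatest elements adjoined. -/
abbrev TruncProd (P₁ P₂ : Type*) [PartialOrder P₁] [BoundedOrder P₁]
    [PartialOrder P₂] [BoundedOrder P₂] : Type _ :=
  WithBot (WithTop (Interior P₁ × Interior P₂))

/-- Embedding of interior pairs into the truncated product. -/
def emb (P₁ P₂ : Type*) [PartialOrder P₁] [BoundedOrder P₁]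
    [PartialOrder P₂] [BoundedOrder P₂] :
    Interior P₁ × Interior P₂ → TruncProd P₁ P₂ :=
  fun p => ((p : WithTop (Interior P₁ × Interior P₂)) : TruncProd P₁ P₂)

/-! An interior pair `(b₁, b₂)` of the truncated product shares an atom with an interior pair
`(a₁, a₂)` iff `b₁` shares one with `a₁` and `b₂` with `a₂`, because the atoms of the truncated
product are exactly the pairs of atoms. Since `A` consists of interior pairs, `I(Q, A)` is
therefore the top together with the interior pairs whose coordinates lie in `I(P₁, A↾₁)` and
`I(P₂, A↾₂)`. The hypotheses on the blockers give an intersecter of each factor other than its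
top, so the top of `Q` is not minimal, and minimality among pairs is minimality in each
coordinate. -/

section Inters

variable {P : Type*} [PartialOrder P] [OrderBot P] {A : Set P}

def SharesAtom (b a : P) : Prop := ∃ z, IsAtom z ∧ z ≤ b ∧ z ≤ a

lemma mem_inters_iff (hA : ∃ a ∈ A, a ≠ ⊥) {b : P} :
    b ∈ inters P A ↔ ∀ a ∈ A, a ≠ ⊥ → SharesAtom b a := by
  obtain ⟨a, ha, ha_bot⟩ := hA
  have hA_empty : A ≠ ∅ := (nonempty_of_mem ha).ne_empty
  have hA_bot : A ≠ {⊥} := fun h => ha_bot (by rwa [h, mem_singleton_iff] at ha)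
  rw [inters, if_neg hA_empty, if_neg hA_bot]
  rfl

lemma bot_notMem_inters (hA : ∃ a ∈ A, a ≠ ⊥) : ⊥ ∉ inters P A := by
  obtain ⟨a, ha, ha_bot⟩ := hA
  intro h
  obtain ⟨z, hz, hz_bot, -⟩ := (mem_inters_iff ⟨a, ha, ha_bot⟩).1 h a ha ha_bot
  exact hz.1 (le_bot_iff.1 hz_bot)

lemma top_mem_inters [OrderTop P] [IsAtomic P] (hA : ∃ a ∈ A, a ≠ ⊥) : ⊤ ∈ inters P A := by
  refine (mem_inters_iff hA).2 fun a _ ha_bot => ?_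
  obtain ⟨z, hz, hza⟩ := (eq_bot_or_exists_atom_le a).resolve_left ha_bot
  exact ⟨z, hz, le_top, hza⟩

end Inters

lemma exists_mem_ne_of_minsOf_ne_singleton {P : Type*} [Preorder P] {S : Set P} {x : P}
    (hx : x ∈ S) (h : minsOf P S ≠ {x}) : ∃ m ∈ S, m ≠ x := by
  by_contra! hS
  have hS_eq : S = {x} := eq_singleton_iff_unique_mem.2 ⟨hx, hS⟩
  exact h (by ext y; simp [minsOf, hS_eq])

lemma minimal_prod_iff {α β : Type*} [Preorder α] [Preorder β] {P : α → Prop} {Q : β → Prop}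
    {x : α × β} : Minimal (fun y => P y.1 ∧ Q y.2) x ↔ Minimal P x.1 ∧ Minimal Q x.2 := by
  refine ⟨fun h => ⟨⟨h.1.1, fun y hy hyx => ?_⟩, ⟨h.1.2, fun y hy hyx => ?_⟩⟩,
    fun ⟨h₁, h₂⟩ => ⟨⟨h₁.1, h₂.1⟩, fun y hy hyx => ⟨h₁.2 hy.1 hyx.1, h₂.2 hy.2 hyx.2⟩⟩⟩
  · exact (h.2 (y := (y, x.2)) ⟨hy, h.1.2⟩ ⟨hyx, le_rfl⟩).1
  · exact (h.2 (y := (x.1, y)) ⟨h.1.1, hy⟩ ⟨le_rfl, hyx⟩).2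

lemma Interior.isMin_iff_isAtom {P : Type*} [PartialOrder P] [BoundedOrder P] {x : Interior P} :
    IsMin x ↔ IsAtom x.1 :=
  ⟨fun h => ⟨x.2.1, fun b hb => by_contra fun hb_bot =>
      h.not_lt (b := ⟨b, hb_bot, ne_top_of_lt hb⟩) hb⟩,
    fun h => isMin_iff_forall_not_lt.2 fun y hy => y.2.1 (h.2 _ hy)⟩

lemma Interior.minimal_iff {P : Type*} [PartialOrder P] [BoundedOrder P] {S : Set P}
    (hS : ⊥ ∉ S) {x : Interior P} :
    Minimal (fun y : Interior P => y.1 ∈ S) x ↔ Minimal (· ∈ S) x.1 :=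
  ⟨fun h => ⟨h.1, fun y hy hyx =>
      h.2 (y := ⟨y, ne_of_mem_of_not_mem hy hS, ne_top_of_le_ne_top x.2.2 hyx⟩) hy hyx⟩,
    fun h => ⟨h.1, fun _ hy hyx => h.2 hy hyx⟩⟩

namespace TruncProd

variable {P₁ P₂ : Type*} [PartialOrder P₁] [BoundedOrder P₁] [PartialOrder P₂] [BoundedOrder P₂]

lemma emb_le_emb {p q : Interior P₁ × Interior P₂} : emb P₁ P₂ p ≤ emb P₁ P₂ q ↔ p ≤ q := by
  simp [emb]

lemma emb_lt_emb {p q : Interior P₁ × Interior P₂} : emb P₁ P₂ p < emb P₁ P₂ q ↔ p < q := by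
  simp [emb]

lemma emb_injective : Function.Injective (emb P₁ P₂) := by
  intro p q h
  simpa [emb] using h

lemma emb_ne_bot (p : Interior P₁ × Interior P₂) : emb P₁ P₂ p ≠ ⊥ := by
  simp [emb]

lemma emb_ne_top (p : Interior P₁ × Interior P₂) : emb P₁ P₂ p ≠ ⊤ := by
  simp [emb]

lemma eq_bot_or_eq_top_or_exists_emb (q : TruncProd P₁ P₂) :
    q = ⊥ ∨ q = ⊤ ∨ ∃ p, q = emb P₁ P₂ p := by
  induction q using WithBot.recBotCoe with
  | bot => exact Or.inl rfl
  | coe x =>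
    induction x using WithTop.recTopCoe with
    | top => exact Or.inr (Or.inl rfl)
    | coe p => exact Or.inr (Or.inr ⟨p, rfl⟩)

lemma isAtom_emb_iff (p : Interior P₁ × Interior P₂) :
    IsAtom (emb P₁ P₂ p) ↔ IsAtom p.1.1 ∧ IsAtom p.2.1 := by
  rw [← Interior.isMin_iff_isAtom, ← Interior.isMin_iff_isAtom, ← Prod.isMin_iff]
  refine ⟨fun h => isMin_iff_forall_not_lt.2 fun r hr => emb_ne_bot r (h.2 _ (emb_lt_emb.2 hr)),
    fun h => ⟨emb_ne_bot p, fun q hq => ?_⟩⟩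
  rcases eq_bot_or_eq_top_or_exists_emb q with rfl | rfl | ⟨r, rfl⟩
  · rfl
  · exact absurd hq not_top_lt
  · exact absurd (emb_lt_emb.1 hq) h.not_lt

lemma sharesAtom_emb_iff (p r : Interior P₁ × Interior P₂) :
    SharesAtom (emb P₁ P₂ p) (emb P₁ P₂ r) ↔ SharesAtom p.1.1 r.1.1 ∧ SharesAtom p.2.1 r.2.1 := by
  constructor
  · rintro ⟨z, hz, hzp, hzr⟩
    rcases eq_bot_or_eq_top_or_exists_emb z with rfl | rfl | ⟨z, rfl⟩
    · exact absurd rfl hz.1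
    · exact absurd (top_le_iff.1 hzr) (emb_ne_top r)
    · rw [isAtom_emb_iff] at hz
      rw [emb_le_emb] at hzp hzr
      exact ⟨⟨z.1.1, hz.1, hzp.1, hzr.1⟩, ⟨z.2.1, hz.2, hzp.2, hzr.2⟩⟩
  · rintro ⟨⟨z₁, hz₁, hz₁p, hz₁r⟩, ⟨z₂, hz₂, hz₂p, hz₂r⟩⟩
    let z : Interior P₁ × Interior P₂ :=
      (⟨z₁, hz₁.1, ne_top_of_le_ne_top p.1.2.2 hz₁p⟩, ⟨z₂, hz₂.1, ne_top_of_le_ne_top p.2.2.2 hz₂p⟩)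
    exact ⟨emb P₁ P₂ z, (isAtom_emb_iff z).2 ⟨hz₁, hz₂⟩, emb_le_emb.2 ⟨hz₁p, hz₂p⟩,
      emb_le_emb.2 ⟨hz₁r, hz₂r⟩⟩

section Product

variable {S : Set (TruncProd P₁ P₂)} {S₁ : Set P₁} {S₂ : Set P₂}

lemma eq_setOf_emb_union_top (hS : ∀ p, emb P₁ P₂ p ∈ S ↔ p.1.1 ∈ S₁ ∧ p.2.1 ∈ S₂)
    (hS_bot : ⊥ ∉ S) (hS_top : ⊤ ∈ S) :
    S = {q | ∃ p, q = emb P₁ P₂ p ∧ p.1.1 ∈ S₁ \ {⊤} ∧ p.2.1 ∈ S₂ \ {⊤}} ∪ {⊤} := by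
  ext q
  rcases eq_bot_or_eq_top_or_exists_emb q with rfl | rfl | ⟨p, rfl⟩
  · simp [hS_bot, (emb_ne_bot _).symm]
  · simp [hS_top]
  · refine ⟨fun h => Or.inl ⟨p, rfl, ⟨((hS p).1 h).1, p.1.2.2⟩, ⟨((hS p).1 h).2, p.2.2.2⟩⟩, ?_⟩
    rintro (⟨r, hr, ⟨h₁, -⟩, ⟨h₂, -⟩⟩ | h)
    · exact emb_injective hr ▸ (hS r).2 ⟨h₁, h₂⟩
    · exact absurd h (emb_ne_top p)

lemma minimal_emb_iff (hS : ∀ p, emb P₁ P₂ p ∈ S ↔ p.1.1 ∈ S₁ ∧ p.2.1 ∈ S₂)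
    (hS_bot : ⊥ ∉ S) (hS₁_bot : ⊥ ∉ S₁) (hS₂_bot : ⊥ ∉ S₂) {p : Interior P₁ × Interior P₂} :
    Minimal (· ∈ S) (emb P₁ P₂ p) ↔ Minimal (· ∈ S₁) p.1.1 ∧ Minimal (· ∈ S₂) p.2.1 := by
  have hS_emb : Minimal (· ∈ S) (emb P₁ P₂ p) ↔ Minimal (fun r => emb P₁ P₂ r ∈ S) p := by
    refine ⟨fun h => ⟨h.1, fun r hr hrp => emb_le_emb.1 (h.2 hr (emb_le_emb.2 hrp))⟩,
      fun h => ⟨h.1, fun q hq hqp => ?_⟩⟩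
    rcases eq_bot_or_eq_top_or_exists_emb q with rfl | rfl | ⟨r, rfl⟩
    · exact absurd hq hS_bot
    · exact absurd (top_le_iff.1 hqp) (emb_ne_top p)
    · exact emb_le_emb.2 (h.2 hq (emb_le_emb.1 hqp))
  simp only [hS_emb, hS]
  exact minimal_prod_iff.trans
    (and_congr (Interior.minimal_iff hS₁_bot) (Interior.minimal_iff hS₂_bot))

lemma minsOf_eq_setOf_emb (hS : ∀ p, emb P₁ P₂ p ∈ S ↔ p.1.1 ∈ S₁ ∧ p.2.1 ∈ S₂)
    (hS_bot : ⊥ ∉ S) (hS₁_bot : ⊥ ∉ S₁) (hS₂_bot : ⊥ ∉ S₂) (hS_ne : ∃ p, emb P₁ P₂ p ∈ S) :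
    minsOf _ S = {q | ∃ p, q = emb P₁ P₂ p ∧ p.1.1 ∈ minsOf P₁ S₁ ∧ p.2.1 ∈ minsOf P₂ S₂} := by
  ext q
  rcases eq_bot_or_eq_top_or_exists_emb q with rfl | rfl | ⟨p, rfl⟩
  · have : ¬ Minimal (· ∈ S) ⊥ := fun h => hS_bot h.1
    simp [minsOf, this, (emb_ne_bot _).symm]
  · obtain ⟨p, hp⟩ := hS_ne
    have : ¬ Minimal (· ∈ S) ⊤ := fun h => emb_ne_top p (top_le_iff.1 (h.2 hp le_top))
    simp [minsOf, this, (emb_ne_top _).symm]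
  · exact (minimal_emb_iff hS hS_bot hS₁_bot hS₂_bot).trans
      ⟨fun h => ⟨p, rfl, h⟩, fun ⟨r, hr, h⟩ => emb_injective hr ▸ h⟩

end Product

def projFst (A : Set (TruncProd P₁ P₂)) : Set P₁ :=
  {a₁ | ∃ p : Interior P₁ × Interior P₂, emb P₁ P₂ p ∈ A ∧ p.1.1 = a₁}

def projSnd (A : Set (TruncProd P₁ P₂)) : Set P₂ :=
  {a₂ | ∃ p : Interior P₁ × Interior P₂, emb P₁ P₂ p ∈ A ∧ p.2.1 = a₂}

lemma emb_mem_inters_iff {A : Set (TruncProd P₁ P₂)} (hA : A ⊆ range (emb P₁ P₂))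
    {r₀ : Interior P₁ × Interior P₂} (hr₀ : emb P₁ P₂ r₀ ∈ A) (p : Interior P₁ × Interior P₂) :
    emb P₁ P₂ p ∈ inters _ A ↔ p.1.1 ∈ inters P₁ (projFst A) ∧ p.2.1 ∈ inters P₂ (projSnd A) := by
  rw [mem_inters_iff ⟨_, hr₀, emb_ne_bot r₀⟩,
    mem_inters_iff (A := projFst A) ⟨_, ⟨r₀, hr₀, rfl⟩, r₀.1.2.1⟩,
    mem_inters_iff (A := projSnd A) ⟨_, ⟨r₀, hr₀, rfl⟩, r₀.2.2.1⟩]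
  constructor
  · intro h
    constructor <;> rintro _ ⟨r, hr, rfl⟩ -
    exacts [((sharesAtom_emb_iff p r).1 (h _ hr (emb_ne_bot r))).1,
      ((sharesAtom_emb_iff p r).1 (h _ hr (emb_ne_bot r))).2]
  · rintro ⟨h₁, h₂⟩ a ha -
    obtain ⟨r, rfl⟩ := hA ha
    exact (sharesAtom_emb_iff p r).2 ⟨h₁ _ ⟨r, ha, rfl⟩ r.1.2.1, h₂ _ ⟨r, ha, rfl⟩ r.2.2.1⟩

end TruncProd

open TruncProd

theorem stmt_7_general {P₁ P₂ : Type*}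
    [PartialOrder P₁] [BoundedOrder P₁] [Fintype P₁]
    [PartialOrder P₂] [BoundedOrder P₂] [Fintype P₂]
    (A : Set (TruncProd P₁ P₂)) (hA : A.Nonempty)
    (hA' : ∀ q ∈ A, q ≠ ⊥ ∧ q ≠ ⊤)
    (A1 : Set P₁)
    (hA1 : A1 = {a₁ : P₁ | ∃ p : Interior P₁ × Interior P₂, emb P₁ P₂ p ∈ A ∧ p.1.1 = a₁})
    (A2 : Set P₂)
    (hA2 : A2 = {a₂ : P₂ | ∃ p : Interior P₁ × Interior P₂, emb P₁ P₂ p ∈ A ∧ p.2.1 = a₂})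
    (h1 : minsOf P₁ (inters P₁ A1) ≠ {(⊤ : P₁)})
    (h2 : minsOf P₂ (inters P₂ A2) ≠ {(⊤ : P₂)}) :
    inters (TruncProd P₁ P₂) A =
      {q : TruncProd P₁ P₂ | ∃ p : Interior P₁ × Interior P₂, q = emb P₁ P₂ p ∧
        p.1.1 ∈ inters P₁ A1 \ {(⊤ : P₁)} ∧ p.2.1 ∈ inters P₂ A2 \ {(⊤ : P₂)}} ∪ {(⊤ : TruncProd P₁ P₂)} ∧
    minsOf (TruncProd P₁ P₂) (inters (TruncProd P₁ P₂) A) =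
      {q : TruncProd P₁ P₂ | ∃ p : Interior P₁ × Interior P₂, q = emb P₁ P₂ p ∧
        p.1.1 ∈ minsOf P₁ (inters P₁ A1) ∧ p.2.1 ∈ minsOf P₂ (inters P₂ A2)} := by
  change A1 = projFst A at hA1
  change A2 = projSnd A at hA2
  subst hA1 hA2
  have hA_emb : A ⊆ range (emb P₁ P₂) := fun q hq => by
    rcases eq_bot_or_eq_top_or_exists_emb q with rfl | rfl | ⟨p, rfl⟩
    exacts [absurd rfl (hA' _ hq).1, absurd rfl (hA' _ hq).2, ⟨p, rfl⟩]
  obtain ⟨q, hp₀⟩ := hA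
  obtain ⟨p₀, rfl⟩ := hA_emb hp₀
  have hA_ne_bot : ∃ a ∈ A, a ≠ ⊥ := ⟨_, hp₀, emb_ne_bot p₀⟩
  have hA₁_ne_bot : ∃ a ∈ projFst A, a ≠ ⊥ := ⟨_, ⟨p₀, hp₀, rfl⟩, p₀.1.2.1⟩
  have hA₂_ne_bot : ∃ a ∈ projSnd A, a ≠ ⊥ := ⟨_, ⟨p₀, hp₀, rfl⟩, p₀.2.2.1⟩
  obtain ⟨m₁, hm₁, hm₁_top⟩ := exists_mem_ne_of_minsOf_ne_singleton (top_mem_inters hA₁_ne_bot) h1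
  obtain ⟨m₂, hm₂, hm₂_top⟩ := exists_mem_ne_of_minsOf_ne_singleton (top_mem_inters hA₂_ne_bot) h2
  let m : Interior P₁ × Interior P₂ :=
    (⟨m₁, ne_of_mem_of_not_mem hm₁ (bot_notMem_inters hA₁_ne_bot), hm₁_top⟩,
      ⟨m₂, ne_of_mem_of_not_mem hm₂ (bot_notMem_inters hA₂_ne_bot), hm₂_top⟩)
  have hS := emb_mem_inters_iff hA_emb hp₀
  exact ⟨eq_setOf_emb_union_top hS (bot_notMem_inters hA_ne_bot) (top_mem_inters hA_ne_bot),
    minsOf_eq_setOf_emb hS (bot_notMem_inters hA_ne_bot) (bot_notMem_inters hA₁_ne_bot)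
      (bot_notMem_inters hA₂_ne_bot) ⟨m, (hS m).2 ⟨hm₁, hm₂⟩⟩⟩

theorem stmt_7 {P₁ P₂ : Type*}
    [PartialOrder P₁] [BoundedOrder P₁] [Fintype P₁]
    [PartialOrder P₂] [BoundedOrder P₂] [Fintype P₂]
    (hc1 : 2 < Fintype.card P₁) (hc2 : 2 < Fintype.card P₂)
    (A : Set (TruncProd P₁ P₂)) (hA : A.Nonempty)
    (hA' : ∀ q ∈ A, q ≠ ⊥ ∧ q ≠ ⊤)
    (A1 : Set P₁)
    (hA1 : A1 = {a₁ : P₁ | ∃ p : Interior P₁ × Interior P₂, emb P₁ P₂ p ∈ A ∧ p.1.1 = a₁})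
    (A2 : Set P₂)
    (hA2 : A2 = {a₂ : P₂ | ∃ p : Interior P₁ × Interior P₂, emb P₁ P₂ p ∈ A ∧ p.2.1 = a₂})
    (h1 : minsOf P₁ (inters P₁ A1) ≠ {(⊤ : P₁)})
    (h2 : minsOf P₂ (inters P₂ A2) ≠ {(⊤ : P₂)}) :
    inters (TruncProd P₁ P₂) A =
      {q : TruncProd P₁ P₂ | ∃ p : Interior P₁ × Interior P₂, q = emb P₁ P₂ p ∧
        p.1.1 ∈ inters P₁ A1 \ {(⊤ : P₁)} ∧ p.2.1 ∈ inters P₂ A2 \ {(⊤ : P₂)}} ∪ {(⊤ : TruncProd P₁ P₂)} ∧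
    minsOf (TruncProd P₁ P₂) (inters (TruncProd P₁ P₂) A) =
      {q : TruncProd P₁ P₂ | ∃ p : Interior P₁ × Interior P₂, q = emb P₁ P₂ p ∧
        p.1.1 ∈ minsOf P₁ (inters P₁ A1) ∧ p.2.1 ∈ minsOf P₂ (inters P₂ A2)} :=
  stmt_7_general A hA hA' A1 hA1 A2 hA2 h1 h2
end

section
/- Let P₁, P₂ be finite bounded posets with |P₁|, |P₂| > 1, Q = P₁ × P₂ their Cartesian product, and A a nonempty subset of Q \ {0̂_Q}. Then I(Q,A) = ⋂_{(a₁,a₂) ∈ A} ((P₁ × I(P₂,{a₂})) ∪ (I(P₁,{a₁}) × P₂)). -/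
open scoped Classical
open Set

lemma isAtom_prod_iff {P₁ P₂ : Type*} [PartialOrder P₁] [OrderBot P₁]
    [PartialOrder P₂] [OrderBot P₂] {z : P₁ × P₂} :
    IsAtom z ↔ (IsAtom z.1 ∧ z.2 = ⊥) ∨ (z.1 = ⊥ ∧ IsAtom z.2) := by
  obtain ⟨x, y⟩ := z
  constructor
  · rintro ⟨hne, hmin⟩
    rcases eq_or_ne y ⊥ with rfl | hy
    · left
      refine ⟨⟨fun hx => hne (Prod.ext hx rfl), fun b hb => ?_⟩, rfl⟩
      have := hmin (b, ⊥) (Prod.lt_iff.2 (Or.inl ⟨hb, le_rfl⟩))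
      exact (Prod.ext_iff.1 this).1
    · have hx : x = ⊥ := by
        have := hmin (x, ⊥) (Prod.lt_iff.2 (Or.inr ⟨le_rfl, hy.bot_lt⟩))
        exact (Prod.ext_iff.1 this).1
      right
      refine ⟨hx, hy, fun b hb => ?_⟩
      have := hmin (x, b) (Prod.lt_iff.2 (Or.inr ⟨le_rfl, hb⟩))
      exact (Prod.ext_iff.1 this).2
  · rintro (⟨⟨hx, hmin⟩, rfl⟩ | ⟨rfl, hy, hmin⟩)
    · refine ⟨fun h => hx (congrArg Prod.fst h), ?_⟩
      rintro ⟨u, v⟩ huv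
      rcases Prod.lt_iff.1 huv with ⟨h1, h2⟩ | ⟨h1, h2⟩
      · exact Prod.ext (hmin u h1) (le_bot_iff.1 h2)
      · exact absurd h2 not_lt_bot
    · refine ⟨fun h => hy (congrArg Prod.snd h), ?_⟩
      rintro ⟨u, v⟩ huv
      rcases Prod.lt_iff.1 huv with ⟨h1, h2⟩ | ⟨h1, h2⟩
      · exact absurd h1 not_lt_bot
      · exact Prod.ext (le_bot_iff.1 h1) (hmin v h2)

lemma mem_inters_singleton {P : Type*} [PartialOrder P] [OrderBot P] {a b : P} :
    b ∈ inters P {a} ↔ ∃ z, IsAtom z ∧ z ≤ b ∧ z ≤ a := by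
  unfold inters
  rw [if_neg (Set.singleton_ne_empty a)]
  rcases eq_or_ne a ⊥ with rfl | h
  · rw [if_pos rfl]
    simp only [Set.mem_empty_iff_false, false_iff, not_exists]
    intro z hz
    exact hz.1.1 (le_bot_iff.1 hz.2.2)
  · rw [if_neg (by simpa [Set.singleton_eq_singleton_iff] using h)]
    simp [h]

theorem stmt_9 {P₁ P₂ : Type*}
    [PartialOrder P₁] [BoundedOrder P₁] [Fintype P₁] [Nontrivial P₁]
    [PartialOrder P₂] [BoundedOrder P₂] [Fintype P₂] [Nontrivial P₂]
    (A : Set (P₁ × P₂)) (hA : A.Nonempty) (hA' : ∀ p ∈ A, p ≠ (⊥ : P₁ × P₂)) :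
    inters (P₁ × P₂) A =
      ⋂ p ∈ A, ((Set.univ ×ˢ inters P₂ {p.2}) ∪ (inters P₁ {p.1} ×ˢ Set.univ)) := by
  have hAne : A ≠ ∅ := hA.ne_empty
  have hAbot : A ≠ {⊥} := fun h => hA' ⊥ (h ▸ rfl) rfl
  rw [show inters (P₁ × P₂) A = {b | ∀ a ∈ A, a ≠ ⊥ → ∃ z, IsAtom z ∧ z ≤ b ∧ z ≤ a} from by
    unfold inters; rw [if_neg hAne, if_neg hAbot]]
  ext b
  simp only [Set.mem_setOf_eq, Set.mem_iInter, Set.mem_union, Set.mem_prod, Set.mem_univ,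
    true_and, and_true]
  constructor
  · intro h p hp
    obtain ⟨z, hz, hzb, hzp⟩ := h p hp (hA' p hp)
    rcases isAtom_prod_iff.1 hz with ⟨h1, h2⟩ | ⟨h1, h2⟩
    · right; exact mem_inters_singleton.2 ⟨z.1, h1, hzb.1, hzp.1⟩
    · left; exact mem_inters_singleton.2 ⟨z.2, h2, hzb.2, hzp.2⟩
  · intro h p hp _
    rcases h p hp with h2 | h1
    · obtain ⟨z, hz, hzb, hza⟩ := mem_inters_singleton.1 h2
      exact ⟨(⊥, z), isAtom_prod_iff.2 (Or.inr ⟨rfl, hz⟩), ⟨bot_le, hzb⟩, ⟨bot_le, hza⟩⟩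
    · obtain ⟨z, hz, hzb, hza⟩ := mem_inters_singleton.1 h1
      exact ⟨(z, ⊥), isAtom_prod_iff.2 (Or.inl ⟨hz, rfl⟩), ⟨hzb, bot_le⟩, ⟨hza, bot_le⟩⟩
end

section
/- Let P be a finite bounded poset with |P| > 1 and define the blocker map b : Ant(P) → Ant(P) by b(A) = min I(P,A). If A₁, A₂ are antichains with A₁ ≤ A₂ in Ant(P) (i.e., F(A₁) ⊆ F(A₂)), then b(A₁) ≥ b(A₂) in Ant(P). That is, the blocker map is order-reversing. -/
open scoped Classical
open Set

/-
Growing the filter generated by `A` shrinks its set of intersecters: every `a ∈ A₁` lies above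
some `a₂ ∈ A₂`, so an atom below both `b` and `a₂` is also below `a`. The degenerate cases are
handled by the antichain property, which forces an antichain containing `0̂` to be `{0̂}`.
Finally, in a finite poset a set and its minimal elements generate the same filter.
-/

lemma upFilter_mono {P : Type*} [Preorder P] {S T : Set P} (hST : S ⊆ T) :
    upFilter P S ⊆ upFilter P T :=
  fun _ ⟨s, hs, hsx⟩ ↦ ⟨s, hST hs, hsx⟩

lemma upFilter_minsOf {P : Type*} [Preorder P] [WellFoundedLT P] (S : Set P) :
    upFilter P (minsOf P S) = upFilter P S := by
  refine Subset.antisymm (fun x ⟨m, hm, hmx⟩ ↦ ⟨m, hm.prop, hmx⟩) ?_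
  rintro x ⟨s, hs, hsx⟩
  obtain ⟨m, hms, hm⟩ := exists_minimal_le_of_wellFoundedLT (· ∈ S) s hs
  exact ⟨m, hm, hms.trans hsx⟩

lemma inters_subset_inters_of_upFilter_subset {P : Type*} [PartialOrder P] [OrderBot P]
    {A₁ A₂ : Set P} (h2 : IsAntichain (· ≤ ·) A₂) (h : upFilter P A₁ ⊆ upFilter P A₂) :
    inters P A₂ ⊆ inters P A₁ := by
  by_cases e1 : A₁ = ∅
  · simp [inters, e1]
  obtain ⟨a₀, ha₀⟩ := nonempty_iff_ne_empty.mpr e1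
  by_cases eb2 : A₂ = {⊥}
  · simp [inters, eb2]
  have hbot₂ : (⊥ : P) ∉ A₂ := fun hb ↦ eb2 (h2.bot_mem_iff.mp hb)
  have eb1 : A₁ ≠ {⊥} := by
    rintro rfl
    obtain ⟨s, hs, hs_bot⟩ := h ⟨⊥, rfl, le_rfl⟩
    exact hbot₂ (le_bot_iff.mp hs_bot ▸ hs)
  have e2 : A₂ ≠ ∅ := by
    obtain ⟨s, hs, -⟩ := h ⟨a₀, ha₀, le_rfl⟩
    exact (nonempty_of_mem hs).ne_empty
  intro b hb
  simp only [inters, e1, eb1, e2, eb2, if_false, mem_ofPred_eq] at hb ⊢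
  intro a ha _
  obtain ⟨a₂, ha₂, ha₂a⟩ := h ⟨a, ha, le_rfl⟩
  obtain ⟨z, hz, hzb, hza₂⟩ := hb a₂ ha₂ (ne_of_mem_of_not_mem ha₂ hbot₂)
  exact ⟨z, hz, hzb, hza₂.trans ha₂a⟩

theorem stmt_11_general {P : Type*} [PartialOrder P] [BoundedOrder P] [Fintype P]
    (A₁ A₂ : Set P) (h2 : IsAntichain (· ≤ ·) A₂)
    (h : upFilter P A₁ ⊆ upFilter P A₂) :
    upFilter P (bmap P A₂) ⊆ upFilter P (bmap P A₁) := by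
  simp only [bmap, upFilter_minsOf]
  exact upFilter_mono (inters_subset_inters_of_upFilter_subset h2 h)

theorem stmt_11 {P : Type*} [PartialOrder P] [BoundedOrder P] [Fintype P] [Nontrivial P]
    (A₁ A₂ : Set P) (h1 : IsAntichain (· ≤ ·) A₁) (h2 : IsAntichain (· ≤ ·) A₂)
    (h : upFilter P A₁ ⊆ upFilter P A₂) :
    upFilter P (bmap P A₂) ⊆ upFilter P (bmap P A₁) :=
  stmt_11_general A₁ A₂ h2 h
end

section
/- Let P be a finite bounded poset with |P| > 1. For every antichain A of P, A ⊆ I(P, b(A)), where b(A) = min I(P,A) is the blocker of A. (Reciprocity property for intersecters.) -/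
open scoped Classical
open Set

theorem stmt_12 {P : Type*} [PartialOrder P] [BoundedOrder P] [Fintype P] [Nontrivial P]
    (A : Set P) (hA : IsAntichain (· ≤ ·) A) :
    A ⊆ inters P (bmap P A) := by
  intro a ha
  by_cases hAe : A = ∅
  · simp [hAe] at ha
  by_cases hAb : A = {(⊥ : P)}
  · -- inters P A = ∅, so bmap P A = ∅, and inters P ∅ = univ
    have h1 : inters P A = ∅ := by
      simp [inters, hAe, hAb]
    have h2 : bmap P A = ∅ := by
      simp [bmap, minsOf, h1, Minimal]
    simp [h2, inters]
  -- main case: there is an element of A that is not ⊥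
  obtain ⟨a0, ha0, ha0b⟩ : ∃ x ∈ A, x ≠ (⊥ : P) := by
    by_contra h
    push_neg at h
    apply hAb
    ext x
    constructor
    · intro hx; simp [h x hx]
    · intro hx
      simp only [Set.mem_singleton_iff] at hx
      obtain ⟨y, hy⟩ := Set.nonempty_iff_ne_empty.2 hAe
      have := h y hy
      subst hx; rwa [← this]
  -- a ≠ ⊥
  have haB : a ≠ ⊥ := by
    intro h
    by_cases hxa : a0 = a
    · exact ha0b (hxa.trans h)
    · exact hA ha ha0 (fun e => hxa e.symm) (h ▸ bot_le) |>.elim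
  have hIA : inters P A = {b | ∀ x ∈ A, x ≠ ⊥ → ∃ z : P, IsAtom z ∧ z ≤ b ∧ z ≤ x} := by
    simp [inters, hAe, hAb]
  by_cases hBe : bmap P A = ∅
  · simp [hBe, inters]
  by_cases hBb : bmap P A = {(⊥ : P)}
  · exfalso
    have hbm : (⊥ : P) ∈ bmap P A := by simp [hBb]
    have hbi : (⊥ : P) ∈ inters P A := hbm.1
    rw [hIA] at hbi
    obtain ⟨z, hz, hz1, hz2⟩ := hbi a0 ha0 ha0b
    exact hz.1 (le_bot_iff.1 hz1)
  rw [inters, if_neg hBe, if_neg hBb]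
  intro m hm hmB
  have hmi : m ∈ inters P A := hm.1
  rw [hIA] at hmi
  obtain ⟨z, hz, hz1, hz2⟩ := hmi a ha haB
  exact ⟨z, hz, hz2, hz1⟩
end

section
/- Let P be a finite bounded poset with |P| > 1 and b the blocker map on Ant(P). For each B in the image Antb(P) of b, the preimage b⁻¹(B) = {A ∈ Ant(P) : b(A) = B} is closed under the join of the lattice Ant(P): if b(A₁) = b(A₂) = B then b(A₁ ∨ A₂) = B, where A₁ ∨ A₂ = min(A₁ ∪ A₂). -/
open scoped Classical
open Set

/-!
The blocker `b(A)` is the set of minimal elements of the upper set `I(P, A)`, so in a finite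
poset `b(A₁) = b(A₂)` forces `I(P, A₁) = I(P, A₂)`. Apart from the exceptional antichain `{0̂}`,
`I(P, A)` is the set of `x` sharing an atom with every nonzero `a ∈ A`; this condition is
monotone in `a`, so it holds for all of `A₁ ∪ A₂` as soon as it holds for the minimal elements,
and it holds for a union iff it holds for both parts. Hence
`I(P, min (A₁ ∪ A₂)) = I(P, A₁) ∩ I(P, A₂) = I(P, A₁)`.
-/

lemma minsOf_singleton {P : Type*} [Preorder P] (a : P) : minsOf P {a} = {a} := by
  ext x
  exact ⟨fun hx => hx.prop, fun hx => ⟨hx, fun y hy _ => (hy.trans hx.symm).ge⟩⟩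

section Blocker

variable {P : Type*} [PartialOrder P] [OrderBot P]

def atomInters (A : Set P) : Set P :=
  {x | ∀ a ∈ A, a ≠ ⊥ → ∃ z, IsAtom z ∧ z ≤ x ∧ z ≤ a}

lemma inters_eq_ite (A : Set P) :
    inters P A = if A = {⊥} then ∅ else atomInters A := by
  unfold inters
  split_ifs with h₀ h₁ <;> first | rfl | simp_all [atomInters]

lemma isUpperSet_atomInters (A : Set P) : IsUpperSet (atomInters A) :=
  fun _ _ hxy hx a ha ha0 =>
    let ⟨z, hz, hzx, hza⟩ := hx a ha ha0
    ⟨z, hz, hzx.trans hxy, hza⟩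

lemma isUpperSet_inters (A : Set P) : IsUpperSet (inters P A) := by
  rw [inters_eq_ite]
  split_ifs
  · exact isUpperSet_empty
  · exact isUpperSet_atomInters A

lemma atomInters_union (A B : Set P) :
    atomInters (A ∪ B) = atomInters A ∩ atomInters B := by
  ext x
  simp only [atomInters, mem_union, mem_inter_iff, mem_ofPred_eq, or_imp, forall_and]

lemma atomInters_minsOf [WellFoundedLT P] {S : Set P} (hS : ⊥ ∉ S) :
    atomInters (minsOf P S) = atomInters S := by
  refine subset_antisymm (fun x hx a ha ha0 => ?_) fun x hx m hm hm0 => hx m hm.prop hm0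
  obtain ⟨m, hma, hm⟩ := exists_minimal_le_of_wellFoundedLT (· ∈ S) a ha
  obtain ⟨z, hz, hzx, hzm⟩ := hx m hm (ne_of_mem_of_not_mem hm.prop hS)
  exact ⟨z, hz, hzx, hzm.trans hma⟩

lemma top_mem_atomInters [OrderTop P] [IsAtomic P] (A : Set P) : ⊤ ∈ atomInters A :=
  fun a _ ha0 =>
    let ⟨z, hz, hza⟩ := (eq_bot_or_exists_atom_le a).resolve_left ha0
    ⟨z, hz, le_top, hza⟩

lemma inters_eq_empty_iff [OrderTop P] [IsAtomic P] {A : Set P} :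
    inters P A = ∅ ↔ A = {⊥} := by
  rw [inters_eq_ite]
  split_ifs with hA
  · simp [hA]
  · simpa [hA] using Set.Nonempty.ne_empty ⟨⊤, top_mem_atomInters A⟩

lemma inters_eq_upFilter_bmap [WellFoundedLT P] (A : Set P) :
    inters P A = upFilter P (bmap P A) := by
  ext x
  refine ⟨fun hx => ?_, fun ⟨m, hm, hmx⟩ => isUpperSet_inters A hmx hm.prop⟩
  obtain ⟨m, hmx, hm⟩ := exists_minimal_le_of_wellFoundedLT (· ∈ inters P A) x hx
  exact ⟨m, hm, hmx⟩

end Blocker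

theorem stmt_14_general {P : Type*} [PartialOrder P] [BoundedOrder P] [Fintype P]
    (B A₁ A₂ : Set P) (h1 : IsAntichain (· ≤ ·) A₁) (h2 : IsAntichain (· ≤ ·) A₂)
    (hB1 : bmap P A₁ = B) (hB2 : bmap P A₂ = B) :
    bmap P (minsOf P (A₁ ∪ A₂)) = B := by
  have hI : inters P A₁ = inters P A₂ := by
    rw [inters_eq_upFilter_bmap, inters_eq_upFilter_bmap, hB1, hB2]
  rw [← hB1, bmap, bmap]
  by_cases hA₁ : A₁ = {⊥}
  · have hA₂ : A₂ = {⊥} := inters_eq_empty_iff.1 (hI ▸ inters_eq_empty_iff.2 hA₁)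
    rw [hA₁, hA₂, union_self, minsOf_singleton]
  have hA₂ : A₂ ≠ {⊥} := fun hA₂ => hA₁ (inters_eq_empty_iff.1 (hI ▸ inters_eq_empty_iff.2 hA₂))
  have hbot : ⊥ ∉ A₁ ∪ A₂ := by
    rw [mem_union, h1.bot_mem_iff, h2.bot_mem_iff]
    tauto
  have hC : minsOf P (A₁ ∪ A₂) ≠ {⊥} := fun hC =>
    hbot (show ⊥ ∈ minsOf P (A₁ ∪ A₂) from hC ▸ mem_singleton ⊥).prop
  have hT : atomInters A₁ = atomInters A₂ := by
    simpa only [inters_eq_ite, if_neg hA₁, if_neg hA₂] using hI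
  rw [inters_eq_ite, if_neg hC, atomInters_minsOf hbot, atomInters_union, ← hT, inter_self,
    inters_eq_ite, if_neg hA₁]

theorem stmt_14 {P : Type*} [PartialOrder P] [BoundedOrder P] [Fintype P] [Nontrivial P]
    (B A₁ A₂ : Set P) (h1 : IsAntichain (· ≤ ·) A₁) (h2 : IsAntichain (· ≤ ·) A₂)
    (hB1 : bmap P A₁ = B) (hB2 : bmap P A₂ = B) :
    bmap P (minsOf P (A₁ ∪ A₂)) = B :=
  stmt_14_general B A₁ A₂ h1 h2 hB1 hB2
end

section
/- Let P be a finite bounded poset with |P| > 1. In the lattice Antb(P) of blockers, the least element is the empty antichain, the greatest element is {0̂}, the unique coatom is the set Pᵃ of atoms of P, and the unique atom is b(Pᵃ). -/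
open scoped Classical
open Set

/-- The set of blockers in `P`: the image of the blocker map on antichains. -/
def Antb (P : Type*) [PartialOrder P] [OrderBot P] : Set (Set P) :=
  bmap P '' {A : Set P | IsAntichain (· ≤ ·) A}

/-! Everything is read off the intersecter sets. `I(∅) = P` and `I({0̂}) = ∅` give the extremes
`b(∅) = {0̂}` and `b({0̂}) = ∅`. For any other `A`, every intersecter lies above an atom, so the
filter of `b(A)` sits inside that of `Pᵃ = b({1̂})`. The intersecters of `Pᵃ` are the upper bounds
of `Pᵃ`, and these intersect every `A ≠ {0̂}` since `P` is atomic; by finiteness every intersecter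
of `A` lies above a minimal one, so the filter of `b(Pᵃ)` sits inside that of every `b(A) ≠ ∅`. -/

section Preorder

variable {P : Type*} [Preorder P] {S T : Set P}

lemma upFilter_empty : upFilter P (∅ : Set P) = ∅ := by
  simp [upFilter]

lemma subset_upFilter : S ⊆ upFilter P S :=
  fun s hs => ⟨s, hs, le_rfl⟩

lemma upFilter_subset_upFilter_iff : upFilter P S ⊆ upFilter P T ↔ S ⊆ upFilter P T := by
  refine ⟨subset_upFilter.trans, fun h x ⟨s, hs, hsx⟩ => ?_⟩
  obtain ⟨t, ht, hts⟩ := h hs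
  exact ⟨t, ht, hts.trans hsx⟩

lemma minsOf_subset : minsOf P S ⊆ S :=
  fun _ hx => hx.1

lemma subset_upFilter_minsOf [WellFoundedLT P] : S ⊆ upFilter P (minsOf P S) := fun x hx => by
  obtain ⟨m, hmx, hm⟩ := exists_minimal_le_of_wellFoundedLT (· ∈ S) x hx
  exact ⟨m, hm, hmx⟩

lemma Set.Nonempty.minsOf [WellFoundedLT P] (h : S.Nonempty) : (minsOf P S).Nonempty := by
  obtain ⟨m, hm, -⟩ := subset_upFilter_minsOf h.some_mem
  exact ⟨m, hm⟩

end Preorder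

lemma minsOf_upFilter_of_isAntichain {P : Type*} [PartialOrder P] {S : Set P}
    (hS : IsAntichain (· ≤ ·) S) : minsOf P (upFilter P S) = S := by
  ext x
  refine ⟨fun ⟨⟨s, hs, hsx⟩, hmin⟩ => ?_, fun hx => ⟨subset_upFilter hx, ?_⟩⟩
  · rwa [le_antisymm (hmin (subset_upFilter hs) hsx) hsx]
  · rintro y ⟨s, hs, hsy⟩ hyx
    exact hS.eq hs hx (hsy.trans hyx) ▸ hsy

section OrderBot

variable {P : Type*} [PartialOrder P] [OrderBot P] {A : Set P}

lemma upFilter_singleton_bot : upFilter P ({⊥} : Set P) = univ :=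
  eq_univ_of_forall fun _ => ⟨⊥, rfl, bot_le⟩

lemma isAntichain_setOf_isAtom : IsAntichain (· ≤ ·) {z : P | IsAtom z} :=
  fun _ ha _ hb hab hle => hab ((hb.le_iff_eq ha.1).mp hle)

lemma setOf_isAtom_ne_singleton_bot : {z : P | IsAtom z} ≠ {⊥} :=
  fun h => (h ▸ rfl : (⊥ : P) ∈ {z : P | IsAtom z}).ne_bot rfl

lemma inters_empty : inters P (∅ : Set P) = univ := by
  simp [inters]

lemma inters_singleton_bot : inters P ({⊥} : Set P) = ∅ := by
  simp [inters]

lemma inters_of_ne (h₀ : A ≠ ∅) (h₁ : A ≠ {⊥}) :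
    inters P A = {b | ∀ a ∈ A, a ≠ ⊥ → ∃ z : P, IsAtom z ∧ z ≤ b ∧ z ≤ a} := by
  simp [inters, h₀, h₁]

lemma bmap_empty : bmap P (∅ : Set P) = {⊥} := by
  ext
  simp [bmap, minsOf, inters_empty]

lemma bmap_singleton_bot : bmap P ({⊥} : Set P) = ∅ := by
  simp [bmap, minsOf, inters_singleton_bot]

lemma exists_mem_ne_bot (h₀ : A ≠ ∅) (h₁ : A ≠ {⊥}) : ∃ a ∈ A, a ≠ ⊥ := by
  by_contra! h
  exact (subset_singleton_iff_eq.mp h).elim h₀ h₁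

lemma inters_subset_upFilter_setOf_isAtom (h₀ : A ≠ ∅) : inters P A ⊆ upFilter P {z : P | IsAtom z} := by
  by_cases h₁ : A = {⊥}
  · simp [h₁, inters_singleton_bot]
  obtain ⟨a, ha, hne⟩ := exists_mem_ne_bot h₀ h₁
  rw [inters_of_ne h₀ h₁]
  intro b hb
  obtain ⟨z, hz, hzb, -⟩ := hb a ha hne
  exact ⟨z, hz, hzb⟩

lemma inters_setOf_isAtom : inters P {z : P | IsAtom z} = upperBounds {z : P | IsAtom z} := by
  by_cases h₀ : {z : P | IsAtom z} = ∅
  · simp [h₀, inters_empty]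
  rw [inters_of_ne h₀ setOf_isAtom_ne_singleton_bot]
  ext b
  refine ⟨fun hb a ha => ?_, fun hb a ha _ => ⟨a, ha, hb ha, le_rfl⟩⟩
  obtain ⟨z, hz, hzb, hza⟩ := hb a ha ha.1
  exact (ha.le_iff_eq hz.1).mp hza ▸ hzb

lemma upperBounds_setOf_isAtom_subset_inters [IsAtomic P] (h₁ : A ≠ {⊥}) :
    upperBounds {z : P | IsAtom z} ⊆ inters P A := by
  by_cases h₀ : A = ∅
  · simp [h₀, inters_empty]
  rw [inters_of_ne h₀ h₁]
  intro x hx a _ hne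
  obtain ⟨z, hz, hza⟩ := (eq_bot_or_exists_atom_le a).resolve_left hne
  exact ⟨z, hz, hx hz, hza⟩

end OrderBot

section BoundedOrder

variable {P : Type*} [PartialOrder P] [BoundedOrder P] [Nontrivial P]

lemma inters_singleton_top : inters P ({⊤} : Set P) = upFilter P {z : P | IsAtom z} := by
  rw [inters_of_ne (singleton_ne_empty _) (by simp)]
  ext b
  simp [upFilter]

lemma bmap_singleton_top : bmap P ({⊤} : Set P) = {z : P | IsAtom z} := by
  rw [bmap, inters_singleton_top, minsOf_upFilter_of_isAntichain isAntichain_setOf_isAtom]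

end BoundedOrder

theorem stmt_18 {P : Type*} [PartialOrder P] [BoundedOrder P] [Fintype P] [Nontrivial P] :
    -- least element: the empty antichain
    (∅ : Set P) ∈ Antb P ∧
    (∀ B ∈ Antb P, upFilter P (∅ : Set P) ⊆ upFilter P B) ∧
    -- greatest element: {⊥}
    ({(⊥ : P)} : Set P) ∈ Antb P ∧
    (∀ B ∈ Antb P, upFilter P B ⊆ upFilter P ({(⊥ : P)} : Set P)) ∧
    -- unique coatom: the set of atoms of P
    {z : P | IsAtom z} ∈ Antb P ∧
    {z : P | IsAtom z} ≠ ({(⊥ : P)} : Set P) ∧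
    (∀ B ∈ Antb P, B ≠ ({(⊥ : P)} : Set P) → upFilter P B ⊆ upFilter P {z : P | IsAtom z}) ∧
    -- unique atom: the blocker of the set of atoms of P
    bmap P {z : P | IsAtom z} ∈ Antb P ∧
    bmap P {z : P | IsAtom z} ≠ (∅ : Set P) ∧
    (∀ B ∈ Antb P, B ≠ (∅ : Set P) →
      upFilter P (bmap P {z : P | IsAtom z}) ⊆ upFilter P B) := by
  have hAntichain {x : P} : IsAntichain (· ≤ ·) {x} := subsingleton_singleton.isAntichain _
  refine ⟨⟨{⊥}, hAntichain, bmap_singleton_bot⟩, fun _ _ => by simp [upFilter_empty],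
    ⟨∅, subsingleton_empty.isAntichain _, bmap_empty⟩,
    fun _ _ => by simp [upFilter_singleton_bot], ⟨{⊤}, hAntichain, bmap_singleton_top⟩,
    setOf_isAtom_ne_singleton_bot, ?_, ⟨_, isAntichain_setOf_isAtom, rfl⟩, ?_, ?_⟩
  · rintro B ⟨A, -, rfl⟩ hB
    have h₀ : A ≠ ∅ := by rintro rfl; exact hB bmap_empty
    exact upFilter_subset_upFilter_iff.mpr (minsOf_subset.trans (inters_subset_upFilter_setOf_isAtom h₀))
  · have hTop : (⊤ : P) ∈ inters P {z : P | IsAtom z} := by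
      rw [inters_setOf_isAtom]
      exact fun _ _ => le_top
    exact (Set.Nonempty.minsOf ⟨⊤, hTop⟩).ne_empty
  · rintro B ⟨A, -, rfl⟩ hB
    have h₁ : A ≠ {⊥} := by rintro rfl; exact hB bmap_singleton_bot
    refine upFilter_subset_upFilter_iff.mpr ?_
    calc bmap P {z : P | IsAtom z} ⊆ upperBounds {z : P | IsAtom z} := by
          rw [← inters_setOf_isAtom]; exact minsOf_subset
      _ ⊆ inters P A := upperBounds_setOf_isAtom_subset_inters h₁
      _ ⊆ upFilter P (bmap P A) := subset_upFilter_minsOf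
end

section
/- Let P be a finite bounded poset with |P| > 1. For a nontrivial antichain A of P (A ≠ ∅ and A ≠ {0̂}), the blocker satisfies, in the lattice Ant(P): b(A) = ⋀_{a ∈ A} ⋁_{e ∈ b({a})} {e}, where b({a}) is the set of atoms of P below a, and the meets and joins are taken in Ant(P). -/
open scoped Classical
open Set

lemma inters_singleton {P : Type*} [PartialOrder P] [OrderBot P] {a : P} (ha : a ≠ ⊥) :
    inters P {a} = {b | ∃ z : P, IsAtom z ∧ z ≤ b ∧ z ≤ a} := by
  unfold inters
  rw [if_neg (Set.singleton_nonempty a).ne_empty,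
    if_neg (by simpa [Set.singleton_eq_singleton_iff] using ha)]
  ext b
  simp [ha]

lemma bmap_singleton {P : Type*} [PartialOrder P] [OrderBot P] {a : P} (ha : a ≠ ⊥) :
    bmap P {a} = {z : P | IsAtom z ∧ z ≤ a} := by
  unfold bmap minsOf
  rw [inters_singleton ha]
  ext x
  constructor
  · rintro ⟨⟨z, hz, hzx, hza⟩, hmin⟩
    have hxz : x ≤ z := hmin ⟨z, hz, le_refl z, hza⟩ hzx
    have : x = z := le_antisymm hxz hzx
    subst this
    exact ⟨hz, hza⟩
  · rintro ⟨hx, hxa⟩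
    refine ⟨⟨x, hx, le_refl x, hxa⟩, ?_⟩
    rintro y ⟨w, hw, hwy, hwa⟩ hyx
    have hwx : w ≤ x := hwy.trans hyx
    have : w = x := by
      rcases lt_or_eq_of_le hwx with h | h
      · exact absurd (hx.2 w h) hw.1
      · exact h
    exact this ▸ hwy

lemma minsOf_atoms {P : Type*} [PartialOrder P] [OrderBot P] {a : P} :
    minsOf P {z : P | IsAtom z ∧ z ≤ a} = {z : P | IsAtom z ∧ z ≤ a} := by
  ext x
  constructor
  · exact fun h => h.1
  · rintro ⟨hx, hxa⟩
    refine ⟨⟨hx, hxa⟩, ?_⟩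
    rintro y ⟨hy, hya⟩ hyx
    rcases lt_or_eq_of_le hyx with h | h
    · exact absurd (hx.2 y h) hy.1
    · exact h.ge

theorem stmt_19 {P : Type*} [PartialOrder P] [BoundedOrder P] [Fintype P] [Nontrivial P]
    (A : Set P) (hA : IsAntichain (· ≤ ·) A)
    (h1 : A.Nonempty) (h2 : A ≠ ({(⊥ : P)} : Set P)) :
    bmap P A =
      minsOf P (⋂ a ∈ A, upFilter P (minsOf P (⋃ e ∈ bmap P {a}, ({e} : Set P)))) := by
  have hbot : (⊥ : P) ∉ A := by
    intro hb
    apply h2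
    apply Set.eq_singleton_iff_unique_mem.2
    refine ⟨hb, fun x hx => ?_⟩
    by_contra hne
    exact hA hb hx (Ne.symm hne) bot_le
  have hne : ∀ a ∈ A, a ≠ ⊥ := fun a ha h => hbot (h ▸ ha)
  have key : (⋂ a ∈ A, upFilter P (minsOf P (⋃ e ∈ bmap P {a}, ({e} : Set P)))) = inters P A := by
    unfold inters
    rw [if_neg h1.ne_empty, if_neg h2]
    ext x
    simp only [Set.mem_iInter, Set.mem_setOf_eq]
    constructor
    · intro h a ha _
      have := h a ha
      rw [bmap_singleton (hne a ha)] at this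
      simp only [Set.biUnion_of_singleton] at this
      rw [minsOf_atoms] at this
      obtain ⟨s, ⟨hs, hsa⟩, hsx⟩ := this
      exact ⟨s, hs, hsx, hsa⟩
    · intro h a ha
      obtain ⟨z, hz, hzx, hza⟩ := h a ha (hne a ha)
      rw [bmap_singleton (hne a ha)]
      simp only [Set.biUnion_of_singleton]
      rw [minsOf_atoms]
      exact ⟨z, ⟨hz, hza⟩, hzx⟩
  rw [key]
  rfl
end
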